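/- arXiv:2101.12652 — 3 statements merged into one kernel-verified Lean document; each statement's English description precedes it below -/
import Mathlib

section
/- Let N ≥ 2, k ∈ ℕ with k ≥ 1, and 0 < t₁ < … < t_k. Define v(t,s) = Re( −∏_{ℓ=1}^k ((t + is) − t_ℓ)((t + is) + t_ℓ) ) for t,s ∈ ℝ, and u_ε(x,y) = (1/2)(N − |y|²) + ε Σ_{j=1}^N v(x, y_j) for x ∈ ℝ, y = (y₁,…,y_N) ∈ ℝ^N. Let Ω_ε be the connected component of {(x,y) : u_ε(x,y) > 0} containing the origin. Then for every η ∈ (0,1) there exists ε₀ > 0 such that for all ε ∈ (0,ε₀), Ω_ε ⊆ C_ε := { (x,y) ∈ ℝ^{N+1} : |x| < ε^{−1/(2k)} and |y|² < N(1+η)² }. -/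
/-!
Fix `R = ε^{-1/(2k)}` and `M = N(1+η)²`. The component `Ω_ε` is a connected subset of
`{u_ε > 0}` containing `0 ∈ C_ε`, so it suffices that `u_ε ≤ 0` on `closure C_ε \ C_ε`.
There `|y_j| ≤ B` for a fixed `B`, and uniformly in such `s` we have
`v(x, s) = -x^{2k} (1 + o(1))` as `|x| → ∞`; hence `v ≤ -|x|^{2k}/2` beyond some `x₀` and
`v ≤ K` everywhere. On the face `|y|² = M`, `(N - |y|²)/2 ≤ -ηN` beats `ε Σ v ≤ εNK ≤ ηN`;
on the face `|x| = R > x₀`, `ε Σ v ≤ -εN R^{2k}/2 = -N/2` beats `(N - |y|²)/2 ≤ N/2`.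
-/

open MeasureTheory Set Filter Topology

noncomputable section

/-- Points of `ℝ^{N+1}` written `(x, y)` with `x ∈ ℝ`, `y ∈ ℝ^N`. -/
abbrev Pt (N : ℕ) := ℝ × (Fin N → ℝ)

/-- `v(t,s) = Re( −∏_ℓ ((t+is) − t_ℓ)((t+is) + t_ℓ) )`. -/
def vfun (k : ℕ) (t : Fin k → ℝ) (a s : ℝ) : ℝ :=
  (-∏ l : Fin k, ((((a : ℂ) + (s : ℂ) * Complex.I) - (t l : ℂ)) *
      (((a : ℂ) + (s : ℂ) * Complex.I) + (t l : ℂ)))).re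

/-- `u_ε(x,y) = (1/2)(N − |y|²) + ε Σ_j v(x, y_j)`. -/
def ueps (N k : ℕ) (t : Fin k → ℝ) (ε : ℝ) (p : Pt N) : ℝ :=
  (1 / 2) * ((N : ℝ) - ∑ j, (p.2 j) ^ 2) + ε * ∑ j, vfun k t p.1 (p.2 j)

/-- `Ω_ε`: the connected component of `{u_ε > 0}` containing the origin. -/
def OmT (N k : ℕ) (t : Fin k → ℝ) (ε : ℝ) : Set (Pt N) :=
  connectedComponentIn {p : Pt N | 0 < ueps N k t ε p} 0

open Finset in
theorem norm_prod_sub_sub_pow_le {ι R : Type*} [NormedCommRing R] [NormOneClass R]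
    (s : Finset ι) (w : R) (c : ι → R) {T : ℝ} (hc : ∀ i ∈ s, ‖c i‖ ≤ T) :
    ‖∏ i ∈ s, (w - c i) - w ^ #s‖ ≤ (‖w‖ + T) ^ #s - ‖w‖ ^ #s := by
  induction s using Finset.cons_induction with
  | empty => simp
  | cons a s ha ih =>
    have hca : ‖c a‖ ≤ T := hc a (mem_cons_self a s)
    have ih := ih fun i hi => hc i (mem_cons_of_mem hi)
    have hT : 0 ≤ T := (norm_nonneg _).trans hca
    rw [prod_cons, card_cons]
    calc ‖(w - c a) * ∏ i ∈ s, (w - c i) - w ^ (#s + 1)‖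
        = ‖(w - c a) * (∏ i ∈ s, (w - c i) - w ^ #s) - c a * w ^ #s‖ := by ring_nf
      _ ≤ ‖w - c a‖ * ‖∏ i ∈ s, (w - c i) - w ^ #s‖ + ‖c a‖ * ‖w‖ ^ #s :=
        (norm_sub_le _ _).trans (add_le_add (norm_mul_le _ _)
          ((norm_mul_le _ _).trans (by gcongr; exact norm_pow_le _ _)))
      _ ≤ (‖w‖ + T) * ((‖w‖ + T) ^ #s - ‖w‖ ^ #s) + T * ‖w‖ ^ #s := by
        have hwc : ‖w - c a‖ ≤ ‖w‖ + T := (norm_sub_le _ _).trans (by gcongr)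
        gcongr
      _ = (‖w‖ + T) ^ (#s + 1) - ‖w‖ ^ (#s + 1) := by ring

/-- Writing `z = a + is`, each factor is `z² - t_l² = a² - (t_l² + s² - 2ias)`, so `-v` is
`a^{2k}` up to an error controlled by `norm_prod_sub_sub_pow_le`. -/
theorem vfun_le {k : ℕ} {t : Fin k → ℝ} {B a s : ℝ} (ht : ∀ l, |t l| ≤ B) (hs : |s| ≤ B) :
    vfun k t a s ≤ (|a| + 2 * B) ^ (2 * k) - 2 * |a| ^ (2 * k) := by
  set z : ℂ := a + s * Complex.I
  set c : Fin k → ℂ := fun l => ((t l ^ 2 + s ^ 2 : ℝ) : ℂ) - ((2 * a * s : ℝ) : ℂ) * Complex.I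
  have hprod : ∏ l, ((z - t l) * (z + t l)) = ∏ l, ((a : ℂ) ^ 2 - c l) :=
    Finset.prod_congr rfl fun l _ => by
      simp only [z, c]; push_cast; linear_combination (s : ℂ) ^ 2 * Complex.I_sq
  have hc : ∀ l ∈ Finset.univ, ‖c l‖ ≤ (|a| + 2 * B) ^ 2 - |a| ^ 2 := by
    intro l _
    have hnorm : ‖c l‖ ≤ |t l ^ 2 + s ^ 2| + |2 * a * s| := by
      refine (norm_sub_le _ _).trans ?_
      rw [norm_mul, Complex.norm_I, mul_one, Complex.norm_real, Complex.norm_real,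
        Real.norm_eq_abs, Real.norm_eq_abs]
    have hB : 0 ≤ B := (abs_nonneg s).trans hs
    have := ht l
    rw [abs_of_nonneg (by positivity), abs_mul, abs_mul, abs_two] at hnorm
    nlinarith [sq_abs (t l), sq_abs s, abs_nonneg a, abs_nonneg s, abs_nonneg (t l)]
  have hpow : ((a : ℂ) ^ 2) ^ k = ((|a| ^ (2 * k) : ℝ) : ℂ) := by
    rw [pow_mul, sq_abs]; push_cast; rfl
  have herr := norm_prod_sub_sub_pow_le Finset.univ ((a : ℂ) ^ 2) c hc
  rw [Finset.card_univ, Fintype.card_fin, hpow, norm_pow, Complex.norm_real, Real.norm_eq_abs,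
    add_sub_cancel, ← pow_mul, ← pow_mul] at herr
  have hre := (abs_le.mp ((Complex.abs_re_le_norm _).trans herr)).1
  rw [Complex.sub_re, Complex.ofReal_re] at hre
  rw [vfun, hprod, Complex.neg_re]
  linarith

open Asymptotics in
theorem eventually_add_pow_le_mul_pow (c : ℝ) (n : ℕ) {r : ℝ} (hr : 1 < r) :
    ∀ᶠ x : ℝ in atTop, (x + c) ^ n ≤ r * x ^ n := by
  have hequiv : (fun x : ℝ => x + c) ~[atTop] id :=
    (isLittleO_const_id_atTop c).congr_left fun x => by simp
  filter_upwards [((hequiv.pow n).isLittleO.bound (sub_pos.mpr hr)), eventually_ge_atTop 0]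
    with x hx hx0
  simp only [Pi.sub_apply, Pi.pow_apply, id, Real.norm_eq_abs,
    abs_of_nonneg (pow_nonneg hx0 n)] at hx
  linarith [le_abs_self ((x + c) ^ n - x ^ n)]

theorem exists_vfun_le_and_le_neg_half_pow {k : ℕ} {t : Fin k → ℝ} {B : ℝ} (hB : 0 ≤ B)
    (ht : ∀ l, |t l| ≤ B) :
    ∃ x₀ > 0, ∃ K > 0, ∀ a s : ℝ, |s| ≤ B →
      vfun k t a s ≤ K ∧ (x₀ ≤ |a| → vfun k t a s ≤ -|a| ^ (2 * k) / 2) := by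
  obtain ⟨x₀, hx₀⟩ := eventually_atTop.mp
    ((eventually_add_pow_le_mul_pow (2 * B) (2 * k) (by norm_num : (1 : ℝ) < 3 / 2)).and
      (eventually_gt_atTop 0))
  have hfar : ∀ a s : ℝ, |s| ≤ B → x₀ ≤ |a| → vfun k t a s ≤ -|a| ^ (2 * k) / 2 :=
    fun a s hs ha => by linarith [vfun_le (a := a) ht hs, (hx₀ |a| ha).1]
  refine ⟨|x₀| + 1, by positivity, (|x₀| + 1 + 2 * B) ^ (2 * k), by positivity,
    fun a s hs => ⟨?_, fun ha => hfar a s hs (by linarith [le_abs_self x₀])⟩⟩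
  rcases le_total x₀ |a| with ha | ha
  · linarith [hfar a s hs ha, pow_nonneg (abs_nonneg a) (2 * k),
      pow_nonneg (by positivity : 0 ≤ |x₀| + 1 + 2 * B) (2 * k)]
  · have : |a| + 2 * B ≤ |x₀| + 1 + 2 * B := by linarith [le_abs_self x₀]
    linarith [vfun_le (a := a) ht hs, pow_le_pow_left₀ (by positivity) this (2 * k),
      pow_nonneg (abs_nonneg a) (2 * k)]

theorem ueps_le_of_vfun_le {N k : ℕ} {t : Fin k → ℝ} {ε V : ℝ} {p : Pt N} (hε : 0 ≤ ε)
    (hv : ∀ j, vfun k t p.1 (p.2 j) ≤ V) :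
    ueps N k t ε p ≤ 1 / 2 * ((N : ℝ) - ∑ j, (p.2 j) ^ 2) + ε * (N * V) := by
  unfold ueps
  gcongr
  simpa using Finset.sum_le_card_nsmul Finset.univ _ V fun j _ => hv j

theorem rpow_neg_one_div_pow {ε : ℝ} (hε : 0 ≤ ε) {n : ℕ} (hn : n ≠ 0) :
    (ε ^ (-1 / (n : ℝ))) ^ n = ε⁻¹ := by
  rw [neg_div, one_div, Real.rpow_neg hε, inv_pow, Real.rpow_inv_natCast_pow hε hn]

theorem ueps_nonpos_of_vfun_le_neg_inv {N k : ℕ} {t : Fin k → ℝ} {ε : ℝ} {p : Pt N}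
    (hε : 0 < ε) (hv : ∀ j, vfun k t p.1 (p.2 j) ≤ -(2 * ε)⁻¹) : ueps N k t ε p ≤ 0 := by
  have hu := ueps_le_of_vfun_le hε.le hv
  rw [mul_left_comm, mul_inv_rev, neg_mul_eq_mul_neg, mul_inv_cancel_left₀ hε.ne'] at hu
  nlinarith [Finset.sum_nonneg fun j (_ : j ∈ Finset.univ) => sq_nonneg (p.2 j)]

theorem ueps_nonpos_of_vfun_le {N k : ℕ} {t : Fin k → ℝ} {ε η K : ℝ} {p : Pt N}
    (hε : 0 ≤ ε) (hv : ∀ j, vfun k t p.1 (p.2 j) ≤ K) (hεK : ε * K ≤ η)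
    (hy : (N : ℝ) * (1 + η) ^ 2 ≤ ∑ j, (p.2 j) ^ 2) : ueps N k t ε p ≤ 0 := by
  have hu := ueps_le_of_vfun_le hε hv
  nlinarith [mul_le_mul_of_nonneg_left hεK (Nat.cast_nonneg N : (0 : ℝ) ≤ N),
    mul_nonneg (Nat.cast_nonneg N : (0 : ℝ) ≤ N) (sq_nonneg η)]

theorem abs_le_sqrt_of_sum_sq_le {ι : Type*} [Fintype ι] {y : ι → ℝ} {M : ℝ}
    (hy : ∑ j, y j ^ 2 ≤ M) (j : ι) : |y j| ≤ √M :=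
  Real.abs_le_sqrt ((Finset.single_le_sum (fun i _ => sq_nonneg (y i)) (Finset.mem_univ j)).trans hy)

theorem closure_setOf_lt_and_lt_subset {X : Type*} [TopologicalSpace X] {f g : X → ℝ}
    (hf : Continuous f) (hg : Continuous g) (a b : ℝ) :
    closure {p | f p < a ∧ g p < b} ⊆ {p | f p ≤ a ∧ g p ≤ b} :=
  (closure_inter_subset_inter_closure _ _).trans (inter_subset_inter
    (closure_lt_subset_le hf continuous_const) (closure_lt_subset_le hg continuous_const))

theorem connectedComponentIn_subset_of_closure_diff_subset {X : Type*} [TopologicalSpace X]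
    {F C : Set X} {x : X} (hC : IsOpen C) (hx : x ∈ C) (h : closure C \ C ⊆ Fᶜ) :
    connectedComponentIn F x ⊆ C := by
  by_cases hxF : x ∈ F
  · refine isPreconnected_connectedComponentIn.subset_of_closure_inter_subset hC
      ⟨x, mem_connectedComponentIn hxF, hx⟩ ?_
    rintro p ⟨hpC, hpF⟩
    by_contra hp
    exact h ⟨hpC, hp⟩ (connectedComponentIn_subset F x hpF)
  · simp [connectedComponentIn_eq_empty hxF]

theorem statement11_general (N : ℕ) (hN : 2 ≤ N) (k : ℕ) (hk : 1 ≤ k)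
    (t : Fin k → ℝ) :
    ∀ η ∈ Ioo (0:ℝ) 1, ∃ ε₀ > (0:ℝ), ∀ ε ∈ Ioo (0:ℝ) ε₀,
      OmT N k t ε ⊆
        {p : Pt N | |p.1| < ε ^ (-(1:ℝ) / (2 * (k:ℝ))) ∧
          ∑ j, (p.2 j) ^ 2 < (N : ℝ) * (1 + η) ^ 2} := by
  rintro η ⟨hη, -⟩
  set M := (N : ℝ) * (1 + η) ^ 2
  set B := √M + ∑ l, |t l|
  have htB : ∀ l, |t l| ≤ B := fun l => le_add_of_nonneg_of_le (Real.sqrt_nonneg M)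
    (Finset.single_le_sum (fun i _ => abs_nonneg (t i)) (Finset.mem_univ l))
  obtain ⟨x₀, hx₀, K, hK, hv⟩ := exists_vfun_le_and_le_neg_half_pow (by positivity) htB
  refine ⟨min (η / K) (x₀ ^ (2 * k))⁻¹, by positivity, ?_⟩
  rintro ε ⟨hε, hεε₀⟩
  obtain ⟨hεK, hεx₀⟩ := lt_min_iff.mp hεε₀
  set R := ε ^ (-(1:ℝ) / (2 * (k:ℝ)))
  have hR : R ^ (2 * k) = ε⁻¹ := by
    simpa using rpow_neg_one_div_pow hε.le (n := 2 * k) (by omega)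
  have hx₀R : x₀ < R := lt_of_pow_lt_pow_left₀ (2 * k) (Real.rpow_nonneg hε.le _)
    (hR ▸ (lt_inv_comm₀ hε (by positivity)).mp hεx₀)
  have hsq : Continuous fun p : Pt N => ∑ j, (p.2 j) ^ 2 := by fun_prop
  refine connectedComponentIn_subset_of_closure_diff_subset
    ((isOpen_lt continuous_fst.abs continuous_const).inter (isOpen_lt hsq continuous_const))
    ⟨by simpa using Real.rpow_pos_of_pos hε _, by simp [M]; positivity⟩ ?_
  rintro p ⟨hcl, hnot⟩
  obtain ⟨hxR, hyM⟩ := closure_setOf_lt_and_lt_subset continuous_fst.abs hsq R M hcl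
  have hy : ∀ j, |p.2 j| ≤ B := fun j => (abs_le_sqrt_of_sum_sq_le hyM j).trans
    (le_add_of_nonneg_right (Finset.sum_nonneg fun l _ => abs_nonneg (t l)))
  rcases not_and_or.mp hnot with hxR' | hyM'
  · have hxR : |p.1| = R := le_antisymm hxR (not_lt.mp hxR')
    refine not_lt.mpr (ueps_nonpos_of_vfun_le_neg_inv hε fun j => ?_)
    have hvj := (hv _ _ (hy j)).2 (hxR ▸ hx₀R.le)
    rw [hxR, hR] at hvj
    exact hvj.trans_eq (by ring)
  · exact not_lt.mpr (ueps_nonpos_of_vfun_le hε.le (fun j => (hv _ _ (hy j)).1)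
      ((lt_div_iff₀ hK).mp hεK).le (not_lt.mp hyM'))

theorem statement11 (N : ℕ) (hN : 2 ≤ N) (k : ℕ) (hk : 1 ≤ k)
    (t : Fin k → ℝ) (ht : StrictMono t) (htpos : ∀ i, 0 < t i) :
    ∀ η ∈ Ioo (0:ℝ) 1, ∃ ε₀ > (0:ℝ), ∀ ε ∈ Ioo (0:ℝ) ε₀,
      OmT N k t ε ⊆
        {p : Pt N | |p.1| < ε ^ (-(1:ℝ) / (2 * (k:ℝ))) ∧
          ∑ j, (p.2 j) ^ 2 < (N : ℝ) * (1 + η) ^ 2} :=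
  statement11_general N hN k hk t
end
end

section
/- Let N ≥ 2, k ≥ 1, 0 < t₁ < … < t_k, v(t,s) = Re( −∏_{ℓ=1}^k ((t+is) − t_ℓ)((t+is) + t_ℓ) ), u_ε(x,y) = (1/2)(N − |y|²) + ε Σ_{j=1}^N v(x,y_j), and Ω_ε the connected component of {u_ε > 0} containing the origin. Then: (a) for every C > 0 and δ > 0 there exists ε₀ > 0 such that for all ε ∈ (0,ε₀), every boundary point (x,y) ∈ ∂Ω_ε with |x| ≤ C satisfies | |y|² − N | < δ; (b) for every δ > 0 there exist δ' > 0 and ε₀ > 0 such that for all ε ∈ (0,ε₀), every boundary point (x,y) ∈ ∂Ω_ε with |y| ≤ δ' satisfies | (2ε)^{1/(2k)} |x| − 1 | < δ. -/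
open MeasureTheory Set Filter Topology

noncomputable section

/-!
Writing `x + is = x (1 + i s/x)` shows `v(x, s) = -x^{2k} (1 + o(1))` as `|x| → ∞`, uniformly for
bounded `s`; with continuity this bounds `v` above on every strip `|s| ≤ c`. So for small `ε` the
function `u_ε` is negative on the cylinder `|y|² = N + 1`, which therefore confines `Ω_ε`, and
`u_ε = 0` on `∂Ω_ε`. For `|x| ≤ C` this gives `|y|² - N = 2ε ∑ v(x, y_j) = O(ε)`. Near the axis,
`u_ε = 0` first forces `|x|` to be large, and then `0 = N - |y|² - 2εN x^{2k} (1 + o(1))` forces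
`2ε x^{2k} → 1`.
-/

section ConnectedComponent

variable {X : Type*} [TopologicalSpace X]

theorem connectedComponentIn_subset_of_disjoint_frontier {S U : Set X} {x : X} (hU : IsOpen U)
    (hx : x ∈ U) (hSU : Disjoint (frontier U) S) : connectedComponentIn S x ⊆ U := by
  by_cases hxS : x ∈ S
  · refine isPreconnected_connectedComponentIn.subset_of_closure_inter_subset hU
      ⟨x, mem_connectedComponentIn hxS, hx⟩ fun p ⟨hpU, hpS⟩ => ?_
    by_contra hp
    exact hSU.notMem_of_mem_left ⟨hpU, by rwa [hU.interior_eq]⟩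
      (connectedComponentIn_subset S x hpS)
  · simp [connectedComponentIn_eq_empty hxS]

theorem disjoint_frontier_connectedComponentIn [LocallyConnectedSpace X] {S : Set X}
    (hS : IsOpen S) (x : X) : Disjoint (frontier (connectedComponentIn S x)) S := by
  refine Set.disjoint_left.mpr fun p ⟨hpcl, hpint⟩ hpS => hpint ?_
  obtain ⟨q, hqp, hqx⟩ := mem_closure_iff.mp hpcl _ hS.connectedComponentIn
    (mem_connectedComponentIn hpS)
  rw [hS.connectedComponentIn.interior_eq, connectedComponentIn_eq hqx,
    ← connectedComponentIn_eq hqp]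
  exact mem_connectedComponentIn hpS

theorem frontier_connectedComponentIn_pos_subset [LocallyConnectedSpace X] {u : X → ℝ}
    (hu : Continuous u) (x : X) :
    frontier (connectedComponentIn {q | 0 < u q} x) ⊆ {q | u q = 0} := by
  intro p hp
  have hnonneg : 0 ≤ u p := closure_lt_subset_le continuous_const hu
    (closure_mono (connectedComponentIn_subset _ x) (frontier_subset_closure hp))
  have hnotpos : ¬ 0 < u p :=
    (disjoint_frontier_connectedComponentIn (isOpen_lt continuous_const hu) x).notMem_of_mem_left hp
  exact le_antisymm (not_lt.mp hnotpos) hnonneg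

end ConnectedComponent

section Vfun

open Complex

variable {k : ℕ} (t : Fin k → ℝ)

theorem continuous_vfun : Continuous fun q : ℝ × ℝ => vfun k t q.1 q.2 := by
  unfold vfun; fun_prop

theorem exists_abs_vfun_le (C c : ℝ) : ∃ K, ∀ x s, |x| ≤ C → |s| ≤ c → |vfun k t x s| ≤ K := by
  obtain ⟨K, hK⟩ := (isCompact_Icc.prod isCompact_Icc).exists_bound_of_continuousOn
    (continuous_vfun t).continuousOn
  exact ⟨K, fun x s hx hs => hK (x, s) ⟨abs_le.mp hx, abs_le.mp hs⟩⟩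

theorem prod_eq_pow_mul_prod {x : ℝ} (hx : x ≠ 0) (s : ℝ) :
    ∏ l, ((x + s * I - t l) * (x + s * I + t l)) =
      x ^ (2 * k) * ∏ l, ((1 + (s / x : ℝ) * I) ^ 2 - ((t l * x⁻¹ : ℝ) : ℂ) ^ 2) := by
  rw [pow_mul, ← Fin.prod_const k, ← Finset.prod_mul_distrib]
  refine Finset.prod_congr rfl fun l _ => ?_
  have : (x : ℂ) ≠ 0 := ofReal_ne_zero.mpr hx
  push_cast
  field_simp
  ring

theorem abs_vfun_add_pow_le (c : ℝ) {η : ℝ} (hη : 0 < η) :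
    ∃ R > 0, ∀ x s, |s| ≤ c → R ≤ |x| → |vfun k t x s + x ^ (2 * k)| ≤ η * x ^ (2 * k) := by
  set Q : ℝ × ℝ → ℂ := fun q => ∏ l, ((1 + (q.1 : ℂ) * I) ^ 2 - ((t l * q.2 : ℝ) : ℂ) ^ 2)
  have hQ0 : Q 0 = 1 := by simp [Q]
  obtain ⟨ρ, hρ, hQρ⟩ := Metric.continuousAt_iff.mp (by fun_prop : Continuous Q).continuousAt η hη
  refine ⟨(|c| + 2) / ρ, by positivity, fun x s hs hx => ?_⟩
  have hρx : |c| + 2 ≤ ρ * |x| := by rwa [div_le_iff₀' hρ] at hx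
  have hx0 : 0 < |x| := pos_of_mul_pos_right (by linarith [abs_nonneg c]) hρ.le
  have hpow : 0 ≤ x ^ (2 * k) := Even.pow_nonneg ⟨k, two_mul k⟩ x
  have hclose : dist (Q (s / x, x⁻¹)) 1 < η := by
    rw [← hQ0]
    refine hQρ ?_
    rw [Prod.dist_eq, max_lt_iff, Prod.fst_zero, Prod.snd_zero, dist_zero_right,
      dist_zero_right, Real.norm_eq_abs, Real.norm_eq_abs, abs_div, abs_inv,
      div_lt_iff₀ hx0, inv_lt_iff_one_lt_mul₀ hx0]
    constructor <;> linarith [le_abs_self c, abs_nonneg c]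
  have hsplit : vfun k t x s + x ^ (2 * k) = x ^ (2 * k) * (1 - Q (s / x, x⁻¹)).re := by
    simp only [vfun, prod_eq_pow_mul_prod t (abs_pos.mp hx0) s, Q, ← ofReal_pow,
      re_ofReal_mul, neg_re, sub_re, one_re]
    ring
  rw [hsplit, abs_mul, abs_of_nonneg hpow, mul_comm η]
  refine mul_le_mul_of_nonneg_left ((abs_re_le_norm _).trans ?_) hpow
  rw [← dist_eq_norm']
  exact hclose.le

theorem exists_vfun_le (c : ℝ) : ∃ K, ∀ x s, |s| ≤ c → vfun k t x s ≤ K := by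
  obtain ⟨R, -, hR⟩ := abs_vfun_add_pow_le t c one_pos
  obtain ⟨K, hK⟩ := exists_abs_vfun_le t R c
  refine ⟨max K 0, fun x s hs => ?_⟩
  rcases le_or_gt R |x| with hx | hx
  · linarith [(abs_le.mp (hR x s hs hx)).2, le_max_right K 0]
  · exact (le_abs_self _).trans ((hK x s hx.le hs).trans (le_max_left K 0))

end Vfun

theorem abs_le_sqrt_of_sum_sq_le_s13 {n : ℕ} {y : Fin n → ℝ} {c : ℝ} (h : ∑ i, y i ^ 2 ≤ c)
    (j : Fin n) : |y j| ≤ √c :=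
  Real.abs_le_sqrt ((Finset.single_le_sum (fun i _ => sq_nonneg (y i)) (Finset.mem_univ j)).trans h)

theorem abs_sum_le_mul_of_abs_le {n : ℕ} {f : Fin n → ℝ} {K : ℝ} (h : ∀ j, |f j| ≤ K) :
    |∑ j, f j| ≤ n * K :=
  (Finset.abs_sum_le_sum_abs _ _).trans <| by
    simpa using Finset.sum_le_card_nsmul Finset.univ _ K fun j _ => h j

theorem eventually_mul_lt (K : ℝ) {δ : ℝ} (hδ : 0 < δ) : ∀ᶠ ε in 𝓝[>] (0 : ℝ), ε * K < δ := by
  have : Tendsto (fun ε : ℝ => ε * K) (𝓝[>] 0) (𝓝 0) := by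
    simpa using ((continuous_mul_const K).tendsto 0).mono_left nhdsWithin_le_nhds
  exact this.eventually_lt_const hδ

theorem abs_sub_one_le_abs_pow_sub_one {T : ℝ} (hT : 0 ≤ T) {n : ℕ} (hn : n ≠ 0) :
    |T - 1| ≤ |T ^ n - 1| := by
  have hgeom : 1 ≤ ∑ i ∈ Finset.range n, T ^ i := by
    simpa using Finset.single_le_sum (fun i _ => pow_nonneg hT i)
      (Finset.mem_range.mpr (Nat.pos_of_ne_zero hn))
  calc |T - 1| ≤ (∑ i ∈ Finset.range n, T ^ i) * |T - 1| :=
        le_mul_of_one_le_left (abs_nonneg _) hgeom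
    _ = |T ^ n - 1| := by rw [← geom_sum_mul, abs_mul, abs_of_pos (zero_lt_one.trans_le hgeom)]

theorem abs_rpow_inv_mul_sub_one_le {a b : ℝ} (ha : 0 ≤ a) (hb : 0 ≤ b) {n : ℕ} (hn : n ≠ 0) :
    |a ^ (n : ℝ)⁻¹ * b - 1| ≤ |a * b ^ n - 1| := by
  simpa [mul_pow, Real.rpow_inv_natCast_pow ha hn] using
    abs_sub_one_le_abs_pow_sub_one (by positivity : 0 ≤ a ^ (n : ℝ)⁻¹ * b) hn

theorem exists_forall_Ioo_of_eventually {P : ℝ → Prop} (h : ∀ᶠ ε in 𝓝[>] (0 : ℝ), P ε) :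
    ∃ ε₀ > 0, ∀ ε ∈ Ioo 0 ε₀, P ε :=
  mem_nhdsGT_iff_exists_Ioo_subset.mp h

section Boundary

variable (N k : ℕ) (t : Fin k → ℝ)

theorem continuous_ueps (ε : ℝ) : Continuous (ueps N k t ε) := by
  unfold ueps vfun; fun_prop

theorem ueps_eq_zero_of_mem_frontier {ε : ℝ} {p : Pt N} (hp : p ∈ frontier (OmT N k t ε)) :
    ueps N k t ε p = 0 :=
  frontier_connectedComponentIn_pos_subset (continuous_ueps N k t ε) 0 hp

theorem eventually_OmT_subset :
    ∀ᶠ ε in 𝓝[>] (0 : ℝ), OmT N k t ε ⊆ {p : Pt N | ∑ j, p.2 j ^ 2 < N + 1} := by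
  obtain ⟨K, hK⟩ := exists_vfun_le t √(N + 1)
  have hsum : Continuous fun p : Pt N => ∑ j, p.2 j ^ 2 := by fun_prop
  filter_upwards [eventually_mul_lt (N * K) one_half_pos, self_mem_nhdsWithin]
    with ε hεK (hε : 0 < ε)
  refine connectedComponentIn_subset_of_disjoint_frontier (isOpen_lt hsum continuous_const)
    (by simp; positivity) (Set.disjoint_left.mpr fun p hp hpos => ?_)
  have hp' : ∑ j, p.2 j ^ 2 = N + 1 := frontier_lt_subset_eq hsum continuous_const hp
  have hV : ∑ j, vfun k t p.1 (p.2 j) ≤ N * K := by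
    simpa using Finset.sum_le_card_nsmul Finset.univ _ K fun j _ =>
      hK p.1 (p.2 j) (abs_le_sqrt_of_sum_sq_le_s13 hp'.le j)
  have hu : ueps N k t ε p = -1 / 2 + ε * ∑ j, vfun k t p.1 (p.2 j) := by
    rw [ueps, hp']; ring
  have : 0 < ueps N k t ε p := hpos
  nlinarith

theorem eventually_abs_sum_sq_sub_lt (C : ℝ) {δ : ℝ} (hδ : 0 < δ) :
    ∀ᶠ ε in 𝓝[>] (0 : ℝ), ∀ p ∈ frontier (OmT N k t ε), |p.1| ≤ C →
      |∑ j, p.2 j ^ 2 - N| < δ := by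
  obtain ⟨K, hK⟩ := exists_abs_vfun_le t C √(N + 1)
  have hsum : Continuous fun p : Pt N => ∑ j, p.2 j ^ 2 := by fun_prop
  filter_upwards [eventually_OmT_subset N k t, eventually_mul_lt (2 * (N * K)) hδ,
    self_mem_nhdsWithin] with ε hΩ hεK (hε : 0 < ε) p hp hpx
  have hy : ∑ j, p.2 j ^ 2 ≤ N + 1 := closure_lt_subset_le hsum continuous_const
    (closure_mono hΩ (frontier_subset_closure hp))
  have hV : |∑ j, vfun k t p.1 (p.2 j)| ≤ N * K :=
    abs_sum_le_mul_of_abs_le fun j => hK _ _ hpx (abs_le_sqrt_of_sum_sq_le_s13 hy j)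
  have hu := ueps_eq_zero_of_mem_frontier N k t hp
  rw [ueps] at hu
  have hy' : ∑ j, p.2 j ^ 2 - N = 2 * ε * ∑ j, vfun k t p.1 (p.2 j) := by linarith
  rw [hy', abs_mul, abs_of_pos (by positivity : 0 < 2 * ε)]
  nlinarith

theorem eventually_le_abs_fst_of_sum_sq_le (R : ℝ) {d : ℝ} (hd : d < N) :
    ∀ᶠ ε in 𝓝[>] (0 : ℝ), ∀ p ∈ frontier (OmT N k t ε), ∑ j, p.2 j ^ 2 ≤ d → R ≤ |p.1| := by
  obtain ⟨K, hK⟩ := exists_abs_vfun_le t R √d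
  filter_upwards [eventually_mul_lt (2 * (N * K)) (sub_pos.mpr hd), self_mem_nhdsWithin]
    with ε hεK (hε : 0 < ε) p hp hy
  by_contra! hx
  have hV : |∑ j, vfun k t p.1 (p.2 j)| ≤ N * K :=
    abs_sum_le_mul_of_abs_le fun j => hK _ _ hx.le (abs_le_sqrt_of_sum_sq_le_s13 hy j)
  have hu := ueps_eq_zero_of_mem_frontier N k t hp
  rw [ueps] at hu
  nlinarith [neg_abs_le (∑ j, vfun k t p.1 (p.2 j))]

theorem exists_eventually_abs_two_mul_pow_sub_one_lt (hN : 0 < N) {δ : ℝ} (hδ : 0 < δ) :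
    ∃ d > 0, ∀ᶠ ε in 𝓝[>] (0 : ℝ), ∀ p ∈ frontier (OmT N k t ε), ∑ j, p.2 j ^ 2 ≤ d →
      |2 * ε * p.1 ^ (2 * k) - 1| < δ := by
  set δ₁ := min δ 1
  have hδ₁ : 0 < δ₁ := lt_min hδ one_pos
  have hNR : (0 : ℝ) < N := Nat.cast_pos.mpr hN
  obtain ⟨R, -, hR⟩ := abs_vfun_add_pow_le t √(N * δ₁ / 4) (η := δ₁ / 4) (by positivity)
  refine ⟨N * δ₁ / 4, by positivity, ?_⟩
  filter_upwards [eventually_le_abs_fst_of_sum_sq_le N k t R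
      (d := N * δ₁ / 4) (by nlinarith [min_le_right δ 1]), self_mem_nhdsWithin]
    with ε hfar (hε : 0 < ε) p hp hy
  set X := p.1 ^ (2 * k)
  set W := 2 * ε * X
  have hasymp : |∑ j, (vfun k t p.1 (p.2 j) + X)| ≤ N * (δ₁ / 4 * X) :=
    abs_sum_le_mul_of_abs_le fun j =>
      hR _ _ (abs_le_sqrt_of_sum_sq_le_s13 hy j) (hfar p hp hy)
  rw [Finset.sum_add_distrib, Finset.sum_const, Finset.card_univ, Fintype.card_fin,
    nsmul_eq_mul] at hasymp
  have hu := ueps_eq_zero_of_mem_frontier N k t hp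
  rw [ueps] at hu
  have hS : 0 ≤ ∑ j, p.2 j ^ 2 := Finset.sum_nonneg fun j _ => sq_nonneg _
  have hkey : N * (W - 1) = 2 * ε * (∑ j, vfun k t p.1 (p.2 j) + N * X) - ∑ j, p.2 j ^ 2 := by
    simp only [W]; linarith
  obtain ⟨hlow, hup⟩ := abs_le.mp hasymp
  have hW : |W - 1| ≤ δ₁ / 4 * W + δ₁ / 4 := by
    refine abs_le.mpr ⟨le_of_mul_le_mul_left ?_ hNR, le_of_mul_le_mul_left ?_ hNR⟩ <;>
      simp only [W] at * <;> nlinarith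
  have hW2 : W ≤ 2 := by nlinarith [(abs_le.mp hW).2, min_le_right δ 1]
  calc |W - 1| ≤ δ₁ / 4 * 2 + δ₁ / 4 := hW.trans (by gcongr)
    _ < δ₁ := by linarith
    _ ≤ δ := min_le_left δ 1

end Boundary

theorem statement13_general (N : ℕ) (hN : 2 ≤ N) (k : ℕ) (hk : 1 ≤ k)
    (t : Fin k → ℝ) :
    -- (a) boundary points with bounded |x| have |y|² close to N
    (∀ C > (0:ℝ), ∀ δ > (0:ℝ), ∃ ε₀ > (0:ℝ), ∀ ε ∈ Ioo (0:ℝ) ε₀,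
      ∀ p ∈ frontier (OmT N k t ε), |p.1| ≤ C →
        |(∑ j, (p.2 j) ^ 2) - (N : ℝ)| < δ) ∧
    -- (b) boundary points with small |y| have |x| ≈ (2ε)^{−1/(2k)}
    (∀ δ > (0:ℝ), ∃ δ' > (0:ℝ), ∃ ε₀ > (0:ℝ), ∀ ε ∈ Ioo (0:ℝ) ε₀,
      ∀ p ∈ frontier (OmT N k t ε), Real.sqrt (∑ j, (p.2 j) ^ 2) ≤ δ' →
        |(2 * ε) ^ ((1:ℝ) / (2 * (k:ℝ))) * |p.1| - 1| < δ) := by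
  refine ⟨fun C _ δ hδ => exists_forall_Ioo_of_eventually
    (eventually_abs_sum_sq_sub_lt N k t C hδ), fun δ hδ => ?_⟩
  obtain ⟨d, hd, hev⟩ := exists_eventually_abs_two_mul_pow_sub_one_lt N k t (by omega) hδ
  refine ⟨√d, Real.sqrt_pos.mpr hd, exists_forall_Ioo_of_eventually ?_⟩
  filter_upwards [hev, self_mem_nhdsWithin] with ε hε (hε0 : 0 < ε) p hp hy
  have hroot := abs_rpow_inv_mul_sub_one_le (by positivity : (0 : ℝ) ≤ 2 * ε)
    (abs_nonneg p.1) (n := 2 * k) (by omega)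
  rw [Even.pow_abs ⟨k, two_mul k⟩, Nat.cast_mul, Nat.cast_ofNat] at hroot
  rw [one_div]
  exact hroot.trans_lt (hε p hp ((Real.sqrt_le_sqrt_iff hd.le).mp hy))

theorem statement13 (N : ℕ) (hN : 2 ≤ N) (k : ℕ) (hk : 1 ≤ k)
    (t : Fin k → ℝ) (ht : StrictMono t) (htpos : ∀ i, 0 < t i) :
    -- (a) boundary points with bounded |x| have |y|² close to N
    (∀ C > (0:ℝ), ∀ δ > (0:ℝ), ∃ ε₀ > (0:ℝ), ∀ ε ∈ Ioo (0:ℝ) ε₀,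
      ∀ p ∈ frontier (OmT N k t ε), |p.1| ≤ C →
        |(∑ j, (p.2 j) ^ 2) - (N : ℝ)| < δ) ∧
    -- (b) boundary points with small |y| have |x| ≈ (2ε)^{−1/(2k)}
    (∀ δ > (0:ℝ), ∃ δ' > (0:ℝ), ∃ ε₀ > (0:ℝ), ∀ ε ∈ Ioo (0:ℝ) ε₀,
      ∀ p ∈ frontier (OmT N k t ε), Real.sqrt (∑ j, (p.2 j) ^ 2) ≤ δ' →
        |(2 * ε) ^ ((1:ℝ) / (2 * (k:ℝ))) * |p.1| - 1| < δ) :=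
  statement13_general N hN k hk t
end
end

section
/- Let N ≥ 2 and k ∈ ℕ, k ≥ 1, with 0 < t₁ < … < t_k. Define v(t,s) = Re( −∏_{ℓ=1}^k ((t+is) − t_ℓ)((t+is) + t_ℓ) ) and u_ε(x,y) = (1/2)(N − |y|²) + ε Σ_{j=1}^N v(x,y_j) on ℝ × ℝ^N. Then there exists ε₀ > 0 such that for all ε ∈ (0,ε₀), u_ε has at least k distinct nondegenerate local maximum points, i.e. at least k points p with ∇u_ε(p) = 0 and the Hessian matrix of u_ε at p negative definite; these points can be taken of the form (±t̄, 0, …, 0) where t̄ ranges over the local maximum points of q(t) = v(t,0) = −∏_{ℓ=1}^k (t² − t_ℓ²). -/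
open MeasureTheory Set Filter Topology

noncomputable section

/-- Second directional derivative of `u` at `p` along `w`. -/
def D2 {N : ℕ} (u : Pt N → ℝ) (w : Pt N) (p : Pt N) : ℝ :=
  fderiv ℝ (fun q => fderiv ℝ u q w) p w

/-
The profile `q = v(·, 0) = -∏ (t² - t_ℓ²)` is a real polynomial of degree `2k` with the `2k`
distinct real roots `±t_ℓ`. Hence all its roots are simple, and by Rolle so are those of `q'`:
`q'' ≠ 0` wherever `q' = 0`. A simple root is not a local maximum, so `q` cannot be `≤ 0` on two
consecutive intervals between roots; as `q < 0` left of its smallest root, `q` is positive on at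
least `k` of these intervals, and its maximum on each is a nondegenerate local maximum `c`.
Since `v(x, s) = Re q(x + is)`, the gradient of `u_ε` vanishes at `(c, 0)`, and its Hessian there
is `w ↦ N ε q''(c) w_x² - (1 + ε q''(c)) |w_y|²`, negative definite as soon as `ε |q''(c)| < 1`.
-/

open Polynomial

theorem IsLocalMax.deriv_deriv_nonpos {f : ℝ → ℝ} {c : ℝ} (h : IsLocalMax f c)
    (hc : ContinuousAt f c) : deriv (deriv f) c ≤ 0 := by
  by_contra! hpos
  have hmin := isLocalMin_of_deriv_deriv_pos hpos h.deriv_eq_zero hc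
  have hconst : f =ᶠ[𝓝 c] fun _ => f c :=
    (h.and hmin).mono fun _ hx => le_antisymm hx.1 hx.2
  have h0 := hconst.deriv.deriv_eq
  simp only [deriv_const', deriv_const] at h0
  linarith

theorem exists_isLocalMax_mem_Ioo_of_pos {f : ℝ → ℝ} {a b x : ℝ}
    (hf : ContinuousOn f (Icc a b)) (ha : f a = 0) (hb : f b = 0) (hx : x ∈ Icc a b)
    (hpos : 0 < f x) : ∃ c ∈ Ioo a b, IsLocalMax f c := by
  obtain ⟨c, hc, hmax⟩ := isCompact_Icc.exists_isMaxOn ⟨x, hx⟩ hf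
  have hfc : 0 < f c := hpos.trans_le (hmax hx)
  have hcI : c ∈ Ioo a b :=
    ⟨hc.1.lt_of_ne (by rintro rfl; linarith), hc.2.lt_of_ne (by rintro rfl; linarith)⟩
  exact ⟨c, hcI, hmax.isLocalMax (Icc_mem_nhds hcI.1 hcI.2)⟩

namespace Polynomial

theorem not_isRoot_derivative_of_natDegree_le {K : Type*} [Field K] [DecidableEq K] {p : K[X]}
    (hp : p ≠ 0) (hdeg : p.natDegree ≤ p.roots.toFinset.card) {c : K} (hc : p.IsRoot c) :
    ¬ p.derivative.IsRoot c := by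
  intro hc'
  have hnodup : p.roots.Nodup := Multiset.toFinset_card_eq_card_iff_nodup.1
    (le_antisymm (Multiset.toFinset_card_le _) (p.card_roots'.trans hdeg))
  have hmult := (one_lt_rootMultiplicity_iff_isRoot hp).2 ⟨hc, hc'⟩
  rw [← count_roots] at hmult
  have := Multiset.nodup_iff_count_le_one.1 hnodup c
  omega

variable {p : ℝ[X]} {n : ℕ} {r : ℕ → ℝ}

theorem natDegree_derivative_le_card_roots
    (hdeg : p.natDegree ≤ p.roots.toFinset.card) :
    p.derivative.natDegree ≤ p.derivative.roots.toFinset.card := by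
  have := natDegree_derivative_le p
  have := card_roots_toFinset_le_derivative p
  omega

theorem eval_derivative_derivative_neg_of_isLocalMax (hp : p.derivative ≠ 0)
    (hdeg : p.natDegree ≤ p.roots.toFinset.card) {c : ℝ}
    (hc : IsLocalMax (fun x => p.eval x) c) : p.derivative.derivative.eval c < 0 := by
  have hderiv : deriv (fun x => p.eval x) = fun x => p.derivative.eval x :=
    _root_.funext fun _ => p.deriv
  have h1 : p.derivative.IsRoot c := by
    simpa [IsRoot, hderiv] using hc.deriv_eq_zero
  have h2 := hc.deriv_deriv_nonpos p.continuous.continuousAt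
  rw [hderiv, Polynomial.deriv] at h2
  exact h2.lt_of_ne (not_isRoot_derivative_of_natDegree_le hp
    (natDegree_derivative_le_card_roots hdeg) h1)

theorem natDegree_le_card_roots_of_strictMonoOn (hp : p ≠ 0)
    (hr : StrictMonoOn r (Iio n)) (hroot : ∀ i < n, p.IsRoot (r i)) (hdeg : p.natDegree ≤ n) :
    p.natDegree ≤ p.roots.toFinset.card := by
  classical
  calc p.natDegree ≤ n := hdeg
    _ = ((Finset.range n).image r).card := by
      rw [Finset.card_image_of_injOn (by simpa using hr.injOn), Finset.card_range]
    _ ≤ p.roots.toFinset.card := Finset.card_le_card fun x hx => by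
      obtain ⟨i, hi, rfl⟩ := Finset.mem_image.1 hx
      exact Multiset.mem_toFinset.2 ((mem_roots hp).2 (hroot i (Finset.mem_range.1 hi)))

theorem not_isLocalMax_of_isRoot (hp : p ≠ 0) (hdeg : p.natDegree ≤ p.roots.toFinset.card)
    {c : ℝ} (hc : p.IsRoot c) : ¬ IsLocalMax (fun x => p.eval x) c := fun hmax =>
  not_isRoot_derivative_of_natDegree_le hp hdeg hc (by simpa using hmax.deriv_eq_zero)

theorem exists_pos_Icc_zero (hp : p ≠ 0) (hdeg : p.natDegree ≤ p.roots.toFinset.card)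
    (hr : StrictMonoOn r (Iio n)) (hroot : ∀ i < n, p.IsRoot (r i))
    (hleft : ∀ x < r 0, p.eval x < 0) (hn : 1 < n) : ∃ x ∈ Icc (r 0) (r 1), 0 < p.eval x := by
  by_contra! hnonpos
  refine not_isLocalMax_of_isRoot hp hdeg (hroot 0 (by omega)) <|
    IsMaxOn.isLocalMax (s := Icc (r 0 - 1) (r 1)) (fun x hx => ?_)
      (Icc_mem_nhds (by linarith) (hr (by simp; omega) (by simpa using hn) zero_lt_one))
  show p.eval x ≤ p.eval (r 0)
  rw [(hroot 0 (by omega)).eq_zero]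
  rcases lt_or_ge x (r 0) with hx0 | hx0
  · exact (hleft x hx0).le
  · exact hnonpos x ⟨hx0, hx.2⟩

theorem exists_pos_Icc_left_or_right (hp : p ≠ 0)
    (hdeg : p.natDegree ≤ p.roots.toFinset.card) (hr : StrictMonoOn r (Iio n))
    (hroot : ∀ i < n, p.IsRoot (r i)) {j : ℕ} (hj0 : 0 < j) (hj : j + 1 < n) :
    (∃ x ∈ Icc (r (j - 1)) (r j), 0 < p.eval x) ∨
      ∃ x ∈ Icc (r j) (r (j + 1)), 0 < p.eval x := by
  by_contra! hnonpos
  refine not_isLocalMax_of_isRoot hp hdeg (hroot j (by omega)) <|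
    IsMaxOn.isLocalMax (s := Icc (r (j - 1)) (r (j + 1))) (fun x hx => ?_)
      (Icc_mem_nhds (hr (by simp; omega) (by simp; omega) (by omega))
        (hr (by simp; omega) (by simp; omega) (by omega)))
  show p.eval x ≤ p.eval (r j)
  rw [(hroot j (by omega)).eq_zero]
  rcases le_total x (r j) with hxj | hxj
  · exact hnonpos.1 x ⟨hx.1, hxj⟩
  · exact hnonpos.2 x ⟨hxj, hx.2⟩

theorem exists_pos_Icc_near (hp : p ≠ 0) (hdeg : p.natDegree ≤ p.roots.toFinset.card)
    (hr : StrictMonoOn r (Iio n)) (hroot : ∀ i < n, p.IsRoot (r i))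
    (hleft : ∀ x < r 0, p.eval x < 0) {i : ℕ} (hi : 2 * i + 1 < n) :
    ∃ j, 2 * i ≤ j + 1 ∧ j ≤ 2 * i ∧ ∃ x ∈ Icc (r j) (r (j + 1)), 0 < p.eval x := by
  rcases Nat.eq_zero_or_pos i with rfl | hi0
  · exact ⟨0, by omega, le_rfl, exists_pos_Icc_zero hp hdeg hr hroot hleft (by omega)⟩
  rcases exists_pos_Icc_left_or_right hp hdeg hr hroot (j := 2 * i) (by omega) hi with h | h
  · refine ⟨2 * i - 1, by omega, by omega, ?_⟩
    rwa [show 2 * i - 1 + 1 = 2 * i by omega]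
  · exact ⟨2 * i, by omega, le_rfl, h⟩

theorem exists_finset_isLocalMax (hr : StrictMonoOn r (Iio n))
    (hroot : ∀ i < n, p.IsRoot (r i)) (hdeg : p.natDegree ≤ n)
    (hleft : ∀ x < r 0, p.eval x < 0) :
    ∃ C : Finset ℝ, n / 2 ≤ C.card ∧ ∀ c ∈ C, IsLocalMax (fun x => p.eval x) c ∧
      p.derivative.eval c = 0 ∧ p.derivative.derivative.eval c < 0 := by
  rcases Nat.lt_or_ge n 2 with hn | hn
  · exact ⟨∅, by omega, by simp⟩
  have hneg : p.eval (r 0 - 1) < 0 := hleft _ (by linarith)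
  have hp : p ≠ 0 := fun h => by simp [h] at hneg
  have hp' : p.derivative ≠ 0 := fun h => by
    obtain ⟨a, rfl⟩ := natDegree_eq_zero.1 (derivative_eq_zero.1 h)
    have h0 := (hroot 0 (by omega)).eq_zero
    simp only [eval_C] at h0 hneg
    linarith
  have hcard := natDegree_le_card_roots_of_strictMonoOn hp hr hroot hdeg
  choose! idx hidx₁ hidx₂ hpos using fun i (hi : i < n / 2) =>
    exists_pos_Icc_near hp hcard hr hroot hleft (i := i) (by omega)
  have hlocal : ∀ i < n / 2, ∃ c ∈ Ioo (r (idx i)) (r (idx i + 1)),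
      IsLocalMax (fun x => p.eval x) c := fun i hi => by
    obtain ⟨x, hx, hpx⟩ := hpos i hi
    have := hidx₂ i hi
    exact exists_isLocalMax_mem_Ioo_of_pos p.continuous.continuousOn (hroot _ (by omega))
      (hroot _ (by omega)) hx hpx
  choose! c hcI hcmax using hlocal
  have hmono : StrictMonoOn c (Iio (n / 2)) := by
    intro i (hi : i < n / 2) i' (hi' : i' < n / 2) hii'
    have := hidx₂ i hi
    have := hidx₂ i' hi'
    have := hidx₁ i' hi'
    have hr' : r (idx i + 1) ≤ r (idx i') :=
      hr.monotoneOn (by simp; omega) (by simp; omega) (by omega)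
    exact (hcI i hi).2.trans_le (hr'.trans (hcI i' hi').1.le)
  refine ⟨(Finset.range (n / 2)).image c, ?_, ?_⟩
  · rw [Finset.card_image_of_injOn (by simpa using hmono.injOn), Finset.card_range]
  · simp only [Finset.mem_image, Finset.mem_range]
    rintro _ ⟨i, hi, rfl⟩
    exact ⟨hcmax i hi, by simpa using (hcmax i hi).deriv_eq_zero,
      eval_derivative_derivative_neg_of_isLocalMax hp' hcard (hcmax i hi)⟩

end Polynomial

def qPoly (k : ℕ) (t : Fin k → ℝ) : ℝ[X] :=
  -∏ l, (X - C (t l)) * (X + C (t l))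

section qPoly

variable {k : ℕ} {t : Fin k → ℝ}

theorem eval_qPoly (x : ℝ) : (qPoly k t).eval x = -∏ l, (x - t l) * (x + t l) := by
  simp [qPoly, eval_prod]

theorem natDegree_qPoly_le : (qPoly k t).natDegree ≤ 2 * k := by
  have hfactor : ∀ l, ((X - C (t l)) * (X + C (t l))).natDegree ≤ 2 := fun l =>
    natDegree_mul_le.trans (by rw [natDegree_X_sub_C, natDegree_X_add_C])
  rw [qPoly, natDegree_neg]
  refine (natDegree_prod_le _ _).trans ?_
  simpa [mul_comm] using Finset.sum_le_sum fun l (_ : l ∈ Finset.univ) => hfactor l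

theorem vfun_eq_re_aeval (a s : ℝ) :
    vfun k t a s = (aeval ((a : ℂ) + s * Complex.I) (qPoly k t)).re := by
  simp [vfun, qPoly]

theorem vfun_zero (a : ℝ) : vfun k t a 0 = (qPoly k t).eval a := by
  rw [vfun_eq_re_aeval, Complex.ofReal_zero, zero_mul, add_zero, ← Complex.coe_algebraMap,
    aeval_algebraMap_apply_eq_algebraMap_eval, Complex.coe_algebraMap, Complex.ofReal_re]

/-- The roots `-t_{k-1} < ⋯ < -t_0 < t_0 < ⋯ < t_{k-1}` of `qPoly k t`, in increasing order
(junk value `0` from index `2k` on). -/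
def qRoot (k : ℕ) (t : Fin k → ℝ) (i : ℕ) : ℝ :=
  if h : i < k then -t ⟨k - 1 - i, by omega⟩
  else if h' : i < 2 * k then t ⟨i - k, by omega⟩ else 0

theorem strictMonoOn_qRoot (ht : StrictMono t) (htpos : ∀ i, 0 < t i) :
    StrictMonoOn (qRoot k t) (Iio (2 * k)) := by
  intro i _ j (hj : j < 2 * k) hij
  unfold qRoot
  by_cases hik : i < k
  · by_cases hjk : j < k
    · simp only [dif_pos hik, dif_pos hjk, neg_lt_neg_iff]
      exact ht (Fin.mk_lt_mk.2 (by omega))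
    · simp only [dif_pos hik, dif_neg hjk, dif_pos hj]
      linarith [htpos ⟨k - 1 - i, by omega⟩, htpos ⟨j - k, by omega⟩]
  · simp only [dif_neg hik, dif_pos (show i < 2 * k by omega), dif_neg (show ¬j < k by omega),
      dif_pos hj]
    exact ht (Fin.mk_lt_mk.2 (by omega))

theorem isRoot_qRoot {i : ℕ} (hi : i < 2 * k) : (qPoly k t).IsRoot (qRoot k t i) := by
  rw [IsRoot, eval_qPoly, neg_eq_zero]
  unfold qRoot
  split_ifs with hik
  · exact Finset.prod_eq_zero (Finset.mem_univ ⟨k - 1 - i, by omega⟩) (by ring)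
  · exact Finset.prod_eq_zero (Finset.mem_univ ⟨i - k, by omega⟩) (by ring)

theorem eval_qPoly_neg (ht : StrictMono t) (htpos : ∀ i, 0 < t i) {x : ℝ}
    (hx : x < qRoot k t 0) : (qPoly k t).eval x < 0 := by
  rw [eval_qPoly, neg_neg_iff_pos]
  refine Finset.prod_pos fun l _ => ?_
  have hk : 0 < k := l.pos
  have hlast : t l ≤ t ⟨k - 1, by omega⟩ := ht.monotone (Fin.mk_le_mk.2 (by omega))
  simp only [qRoot, dif_pos hk, Nat.sub_zero] at hx
  nlinarith [htpos l]

end qPoly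

theorem hasFDerivAt_re_aeval_mul {E : Type*} [NormedAddCommGroup E] [NormedSpace ℝ E]
    (P : ℝ[X]) (c : ℂ) (A : E →L[ℝ] ℂ) (x : E) :
    HasFDerivAt (fun y => (aeval (A y) P * c).re)
      (Complex.reCLM.comp ((aeval (A x) (derivative P) * c) • A)) x := by
  have hP := (((P.hasDerivAt_aeval (A x)).mul_const c).hasFDerivAt.restrictScalars ℝ).comp x
    A.hasFDerivAt
  refine (Complex.reCLM.hasFDerivAt.comp x hP).congr_fderiv ?_
  ext w
  simp [mul_comm]

def zCoord (N : ℕ) (j : Fin N) : Pt N →L[ℝ] ℂ :=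
  Complex.ofRealCLM.comp (ContinuousLinearMap.fst ℝ ℝ (Fin N → ℝ)) +
    Complex.I • Complex.ofRealCLM.comp
      ((ContinuousLinearMap.proj j).comp (ContinuousLinearMap.snd ℝ ℝ (Fin N → ℝ)))

theorem zCoord_apply {N : ℕ} (j : Fin N) (q : Pt N) :
    zCoord N j q = (q.1 : ℂ) + (q.2 j : ℂ) * Complex.I := by
  simp [zCoord, mul_comm]

theorem zCoord_axis {N : ℕ} (j : Fin N) (c : ℝ) : zCoord N j (c, 0) = c := by
  simp [zCoord_apply]

def yCoord (N : ℕ) (j : Fin N) : Pt N →L[ℝ] ℝ :=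
  (ContinuousLinearMap.proj j).comp (ContinuousLinearMap.snd ℝ ℝ (Fin N → ℝ))

@[simp] theorem yCoord_apply {N : ℕ} (j : Fin N) (q : Pt N) : yCoord N j q = q.2 j := rfl

section ueps

variable {N k : ℕ} {t : Fin k → ℝ} {ε : ℝ}

theorem fderiv_ueps_apply (q w : Pt N) :
    fderiv ℝ (ueps N k t ε) q w =
      ε * ∑ j, (aeval (zCoord N j q) (derivative (qPoly k t)) * zCoord N j w).re -
        ∑ j, q.2 j * w.2 j := by
  have hu : ueps N k t ε = fun q => 1 / 2 * ((N : ℝ) - ∑ j, yCoord N j q ^ 2) +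
      ε * ∑ j, (aeval (zCoord N j q) (qPoly k t) * 1).re := by
    ext q
    simp [ueps, vfun_eq_re_aeval, zCoord_apply]
  have hderiv := (((hasFDerivAt_const (N : ℝ) q).fun_sub
      (HasFDerivAt.fun_sum (u := Finset.univ) fun j _ =>
        (yCoord N j).hasFDerivAt.pow 2)).const_mul (1 / 2)).fun_add
      ((HasFDerivAt.fun_sum (u := Finset.univ) fun j _ =>
        hasFDerivAt_re_aeval_mul (qPoly k t) 1 (zCoord N j) q).const_mul ε)
  rw [hu, hderiv.fderiv]
  simp only [add_apply, smul_apply, sub_apply, zero_apply, sum_apply,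
    ContinuousLinearMap.comp_apply, Complex.reCLM_apply, yCoord_apply, smul_eq_mul, mul_one,
    nsmul_eq_mul, Nat.cast_ofNat, Nat.add_one_sub_one, pow_one, mul_assoc, ← Finset.mul_sum]
  ring

theorem D2_ueps (w p : Pt N) :
    D2 (ueps N k t ε) w p =
      ε * ∑ j, (aeval (zCoord N j p) (derivative (derivative (qPoly k t))) *
        zCoord N j w * zCoord N j w).re - ∑ j, w.2 j * w.2 j := by
  have hfun : (fun q => fderiv ℝ (ueps N k t ε) q w) = fun q =>
      ε * ∑ j, (aeval (zCoord N j q) (derivative (qPoly k t)) * zCoord N j w).re -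
        ∑ j, yCoord N j q * w.2 j :=
    _root_.funext fun q => fderiv_ueps_apply q w
  have hderiv := ((HasFDerivAt.fun_sum (u := Finset.univ) fun j _ =>
    hasFDerivAt_re_aeval_mul (derivative (qPoly k t)) (zCoord N j w) (zCoord N j) p).const_mul
      ε).fun_sub (HasFDerivAt.fun_sum (u := Finset.univ) fun j _ =>
        (yCoord N j).hasFDerivAt.mul_const (w.2 j))
  rw [D2, hfun, hderiv.fderiv]
  simp only [sub_apply, smul_apply, sum_apply, ContinuousLinearMap.comp_apply,
    Complex.reCLM_apply, yCoord_apply, smul_eq_mul]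

theorem D2_ueps_axis (c : ℝ) (w : Pt N) :
    D2 (ueps N k t ε) w (c, 0) =
      N * ε * (qPoly k t).derivative.derivative.eval c * w.1 ^ 2 -
        (1 + ε * (qPoly k t).derivative.derivative.eval c) * ∑ j, w.2 j ^ 2 := by
  rw [D2_ueps]
  set a := (qPoly k t).derivative.derivative.eval c
  have hre : ∀ j, (aeval (zCoord N j (c, 0)) (derivative (derivative (qPoly k t))) *
      zCoord N j w * zCoord N j w).re = a * w.1 ^ 2 - a * w.2 j ^ 2 := fun j => by
    have ha : aeval (c : ℂ) (derivative (derivative (qPoly k t))) = a := aeval_ofReal _ c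
    rw [zCoord_axis, ha, zCoord_apply]
    simp only [Complex.mul_re, Complex.add_re, Complex.add_im, Complex.mul_im,
      Complex.ofReal_re, Complex.ofReal_im, Complex.I_re, Complex.I_im]
    ring
  simp only [hre, Finset.sum_sub_distrib, Finset.sum_const, Finset.card_univ, Fintype.card_fin,
    nsmul_eq_mul, ← Finset.mul_sum, ← sq]
  ring

theorem fderiv_ueps_axis_eq_zero {c : ℝ} (hc : (qPoly k t).derivative.eval c = 0) :
    fderiv ℝ (ueps N k t ε) (c, 0) = 0 := by
  have h0 : aeval (c : ℂ) (derivative (qPoly k t)) = 0 := by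
    rw [show aeval (c : ℂ) (derivative (qPoly k t)) = _ from aeval_ofReal _ c, hc]
    simp
  refine ContinuousLinearMap.ext fun w => ?_
  simp [fderiv_ueps_apply, zCoord_axis, h0]

theorem D2_ueps_axis_neg (hN : 0 < N) (hε : 0 < ε) {c : ℝ}
    (hc : (qPoly k t).derivative.derivative.eval c < 0)
    (hsmall : 0 < 1 + ε * (qPoly k t).derivative.derivative.eval c) {w : Pt N} (hw : w ≠ 0) :
    D2 (ueps N k t ε) w (c, 0) < 0 := by
  rw [D2_ueps_axis]
  have hNε : 0 < (N : ℝ) * ε := mul_pos (Nat.cast_pos.2 hN) hε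
  have hy : 0 ≤ ∑ j, w.2 j ^ 2 := Finset.sum_nonneg fun j _ => sq_nonneg _
  by_cases hw1 : w.1 = 0
  · obtain ⟨j, hj⟩ : ∃ j, w.2 j ≠ 0 := by
      by_contra! h
      exact hw (Prod.ext hw1 (_root_.funext h))
    have hy' : 0 < ∑ j, w.2 j ^ 2 :=
      Finset.sum_pos' (fun j _ => sq_nonneg _) ⟨j, Finset.mem_univ j, sq_pos_of_ne_zero hj⟩
    rw [hw1]
    nlinarith
  · have hx : 0 < w.1 ^ 2 := sq_pos_of_ne_zero hw1
    nlinarith [mul_pos (mul_pos hNε (neg_pos.2 hc)) hx]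

end ueps

theorem statement15_general (N : ℕ) (hN : 2 ≤ N) (k : ℕ)
    (t : Fin k → ℝ) (ht : StrictMono t) (htpos : ∀ i, 0 < t i) :
    ∃ ε₀ > (0:ℝ), ∀ ε ∈ Ioo (0:ℝ) ε₀,
      ∃ S : Finset (Pt N), k ≤ S.card ∧
        ∀ p ∈ S,
          -- the points are of the form (±t̄, 0,…,0) with t̄ a local maximum point of q = v(·,0)
          (∃ tb : ℝ, IsLocalMax (fun s => vfun k t s 0) tb ∧
            (p = ((tb, 0) : Pt N) ∨ p = ((-tb, 0) : Pt N))) ∧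
          -- each is a nondegenerate local maximum of u_ε
          fderiv ℝ (ueps N k t ε) p = 0 ∧
          (∀ w : Pt N, w ≠ 0 → D2 (ueps N k t ε) w p < 0) := by
  obtain ⟨C, hCcard, hC⟩ := exists_finset_isLocalMax (strictMonoOn_qRoot ht htpos)
    (fun _ hi => isRoot_qRoot hi) natDegree_qPoly_le fun _ hx => eval_qPoly_neg ht htpos hx
  rw [Nat.mul_div_cancel_left k two_pos] at hCcard
  have hsmall : ∀ᶠ ε in 𝓝 (0 : ℝ), ∀ c ∈ C,
      0 < 1 + ε * (qPoly k t).derivative.derivative.eval c :=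
    (eventually_all_finset C).2 fun c _ =>
      (tendsto_const_nhds.add (tendsto_id.mul_const _)).eventually (lt_mem_nhds (by simp))
  obtain ⟨ε₀, hε₀, hε₀small⟩ := Metric.eventually_nhds_iff.1 hsmall
  refine ⟨ε₀, hε₀, fun ε hε => ⟨C.image fun c => ((c, 0) : Pt N), ?_, ?_⟩⟩
  · rwa [Finset.card_image_of_injective _ fun a b h => congrArg Prod.fst h]
  simp only [Finset.mem_image]
  rintro _ ⟨c, hc, rfl⟩
  obtain ⟨hmax, hd1, hd2⟩ := hC c hc
  have hε' := hε₀small (by rw [Real.dist_0_eq_abs, abs_of_pos hε.1]; exact hε.2) c hc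
  exact ⟨⟨c, by simpa only [vfun_zero] using hmax, Or.inl rfl⟩, fderiv_ueps_axis_eq_zero hd1,
    fun w hw => D2_ueps_axis_neg (by omega) hε.1 hd2 hε' hw⟩

theorem statement15 (N : ℕ) (hN : 2 ≤ N) (k : ℕ) (hk : 1 ≤ k)
    (t : Fin k → ℝ) (ht : StrictMono t) (htpos : ∀ i, 0 < t i) :
    ∃ ε₀ > (0:ℝ), ∀ ε ∈ Ioo (0:ℝ) ε₀,
      ∃ S : Finset (Pt N), k ≤ S.card ∧
        ∀ p ∈ S,
          -- the points are of the form (±t̄, 0,…,0) with t̄ a local maximum point of q = v(·,0)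
          (∃ tb : ℝ, IsLocalMax (fun s => vfun k t s 0) tb ∧
            (p = ((tb, 0) : Pt N) ∨ p = ((-tb, 0) : Pt N))) ∧
          -- each is a nondegenerate local maximum of u_ε
          fderiv ℝ (ueps N k t ε) p = 0 ∧
          (∀ w : Pt N, w ≠ 0 → D2 (ueps N k t ε) w p < 0) :=
  statement15_general N hN k t ht htpos
end
end
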